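/- arXiv:2205.00653 — 4 statements merged into one kernel-verified Lean document; each statement's English description precedes it below -/
import Mathlib

section
/- The 4×4 real transfer matrix T(μ) of the S=1 asymmetric VBS state has characteristic polynomial (X − λ₊(μ))·(X − λ₋(μ))·(X + μ/2)²; in particular, its eigenvalues are λ₊(μ) and λ₋(μ), each simple, and λ₀(μ) = −μ/2 with algebraic multiplicity two. This holds for every μ ∈ [0,1]. -/
open Matrix Kronecker Polynomial

/-- The matrix `A⁽¹⁾` of the S=1 asymmetric VBS state. -/
noncomputable def A1 (μ : ℝ) : Matrix (Fin 2) (Fin 2) ℝ := !![0, 0; -Real.sqrt μ, 0]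

/-- The matrix `A⁽⁰⁾` of the S=1 asymmetric VBS state. -/
noncomputable def A0 (μ : ℝ) : Matrix (Fin 2) (Fin 2) ℝ :=
  (1 / Real.sqrt 2) • !![1, 0; 0, -μ]

/-- The matrix `A⁽⁻¹⁾` of the S=1 asymmetric VBS state. -/
noncomputable def Am1 (μ : ℝ) : Matrix (Fin 2) (Fin 2) ℝ := !![0, Real.sqrt μ; 0, 0]

/-- The transfer matrix `T(μ)` of the S=1 asymmetric VBS state. -/
noncomputable def T (μ : ℝ) : Matrix (Fin 2 × Fin 2) (Fin 2 × Fin 2) ℝ :=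
  A1 μ ⊗ₖ A1 μ + A0 μ ⊗ₖ A0 μ + Am1 μ ⊗ₖ Am1 μ

/-- The eigenvalue `λ₊(μ)`. -/
noncomputable def lamP (μ : ℝ) : ℝ := (μ ^ 2 + 1 + Real.sqrt (μ ^ 4 + 14 * μ ^ 2 + 1)) / 4

/-- The eigenvalue `λ₋(μ)`. -/
noncomputable def lamM (μ : ℝ) : ℝ := (μ ^ 2 + 1 - Real.sqrt (μ ^ 4 + 14 * μ ^ 2 + 1)) / 4

/-! The terms `A⁽±1⁾ ⊗ A⁽±1⁾` only connect `|00⟩` and `|11⟩`, while `A⁽⁰⁾ ⊗ A⁽⁰⁾` is diagonal.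
Hence, in the basis `|00⟩, |11⟩, |01⟩, |10⟩`, the transfer matrix is block diagonal: a `2 × 2`
block with trace `(1 + μ²)/2` and determinant `-3μ²/4`, whose eigenvalues are therefore `λ±(μ)`,
and the scalar `-μ/2` on `|01⟩, |10⟩`. -/

def diagOffDiagEquiv : Fin 2 ⊕ Fin 2 ≃ Fin 2 × Fin 2 where
  toFun := Sum.elim (fun i => (i, i)) (fun i => (i, i + 1))
  invFun p := if p.1 = p.2 then .inl p.1 else .inr p.1
  left_inv := by decide
  right_inv := by decide

noncomputable def transferDiagBlock (μ : ℝ) : Matrix (Fin 2) (Fin 2) ℝ :=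
  !![1 / 2, μ; μ, μ ^ 2 / 2]

theorem T_eq_reindex_fromBlocks {μ : ℝ} (hμ : 0 ≤ μ) :
    T μ = reindex diagOffDiagEquiv diagOffDiagEquiv
      (fromBlocks (transferDiagBlock μ) 0 0 (diagonal fun _ => -(μ / 2))) := by
  have hsqrtμ : Real.sqrt μ * Real.sqrt μ = μ := Real.mul_self_sqrt hμ
  ext ⟨a, b⟩ ⟨c, d⟩
  fin_cases a <;> fin_cases b <;> fin_cases c <;> fin_cases d <;>
    simp [T, A1, A0, Am1, transferDiagBlock, diagOffDiagEquiv, hsqrtμ] <;>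
    ring_nf <;> simp [mul_comm]

theorem charpoly_transferDiagBlock (μ : ℝ) :
    (transferDiagBlock μ).charpoly = (X - C (lamP μ)) * (X - C (lamM μ)) := by
  have hdisc : Real.sqrt (μ ^ 4 + 14 * μ ^ 2 + 1) ^ 2 = μ ^ 4 + 14 * μ ^ 2 + 1 :=
    Real.sq_sqrt (by positivity)
  have hsum : lamP μ + lamM μ = (transferDiagBlock μ).trace := by
    rw [lamP, lamM, transferDiagBlock, trace_fin_two_of]; ring
  have hprod : lamP μ * lamM μ = (transferDiagBlock μ).det := by
    rw [lamP, lamM, transferDiagBlock, det_fin_two_of]; linear_combination (-1/16) * hdisc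
  rw [charpoly_fin_two, ← hsum, ← hprod, C_add, C_mul]
  ring

/-- The characteristic polynomial of the S=1 transfer matrix `T(μ)` is
`(X − λ₊(μ))·(X − λ₋(μ))·(X + μ/2)²`, so its eigenvalues are `λ₊(μ)`, `λ₋(μ)`
(each simple) and `λ₀(μ) = −μ/2` with algebraic multiplicity two, for every `μ ∈ [0,1]`. -/
theorem charpoly_transfer_S1 (μ : ℝ) (hμ : μ ∈ Set.Icc (0 : ℝ) 1) :
    (T μ).charpoly =
      (X - C (lamP μ)) * (X - C (lamM μ)) * (X + C (μ / 2)) ^ 2 := by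
  rw [T_eq_reindex_fromBlocks hμ.1, charpoly_reindex, charpoly_fromBlocks_zero₁₂,
    charpoly_transferDiagBlock, charpoly_diagonal, Fin.prod_univ_two, C_neg, sub_neg_eq_add, sq]
end

section
/- Fix μ ∈ [0,1] and define D_x := (1/√2)·(A⁽¹⁾⊗A⁽⁰⁾ + A⁽⁰⁾⊗A⁽¹⁾ + A⁽⁰⁾⊗A⁽⁻¹⁾ + A⁽⁻¹⁾⊗A⁽⁰⁾) (the transfer-matrix insertion corresponding to the spin-1 operator Ŝˣ). Then for every integer r ≥ 1, lim_{L→∞} Tr[D_x · T(μ)^{r−1} · D_x · T(μ)^{L−r−1}] / Tr[T(μ)^L] = [(λ₊(μ)+1/2)·(λ₊(μ)+μ²/2) / (2·(λ₊(μ)−(μ²+1)/4)·λ₊(μ))] · (λ₀(μ)/λ₊(μ))^r. (This is the transverse spin-spin correlation function ⟨Ŝˣ_j Ŝˣ_{j+r}⟩ = ⟨Ŝʸ_j Ŝʸ_{j+r}⟩ in the infinite-volume S=1 asymmetric VBS state; note λ₊(μ) − (μ²+1)/4 = √(μ⁴+14μ²+1)/4 > 0, so the prefactor is well defined.) -/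
open Matrix Kronecker Filter

/-- The transfer-matrix insertion `D_x` corresponding to the spin-1 operator `Ŝˣ`. -/
noncomputable def Dx (μ : ℝ) : Matrix (Fin 2 × Fin 2) (Fin 2 × Fin 2) ℝ :=
  (1 / Real.sqrt 2) •
    (A1 μ ⊗ₖ A0 μ + A0 μ ⊗ₖ A1 μ + A0 μ ⊗ₖ Am1 μ + Am1 μ ⊗ₖ A0 μ)

/-- The eigenvalue `λ₀(μ)`. -/
noncomputable def lam0 (μ : ℝ) : ℝ := -μ / 2

/-!
On `span{e₀₀, e₁₁}` the transfer matrix acts as `[[1/2, μ], [μ, μ²/2]]`, whose eigenvalues are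
`λ₊` and `λ₋ = (μ² + 1)/2 - λ₊`, the roots of `x² - (μ² + 1)/2 · x - 3μ²/4`; on `span{e₀₁, e₁₀}` it
is `λ₀`. This gives a resolution `T = λ₊ P₊ + λ₋ P₋ + λ₀ Q` into projections with `tr P₊ = 1`, and
`λ₊` strictly dominates `|λ₋|` and `|λ₀|`. Dividing numerator and denominator by `λ₊ ^ L`, the ratio
tends to `∑ᵢ λᵢ ^ (r - 1) tr (Dₓ Pᵢ Dₓ P₊) / λ₊ ^ (r + 1)`. Since `Dₓ` swaps the two invariant
subspaces, only the `λ₀` term survives, and `tr (Dₓ Q Dₓ P₊)` is computed explicitly.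
-/

open Topology

section SpectralResolution

variable {R A ι : Type*} [CommSemiring R] [Semiring A] [Algebra R A] [Fintype ι]

theorem pow_eq_sum_pow_smul_of_resolution {M : A} {P : ι → A} {ev : ι → R}
    (hsum : ∑ i, P i = 1) (heig : ∀ i, P i * M = ev i • P i) (n : ℕ) :
    M ^ n = ∑ i, ev i ^ n • P i := by
  induction n with
  | zero => simpa using hsum.symm
  | succ n ih => simp [pow_succ, ih, Finset.sum_mul, heig, smul_smul]

end SpectralResolution

section TransferMatrix

variable {ι n : Type*} [Fintype ι] [Fintype n] [DecidableEq n]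

theorem trace_mul_pow_mul_mul_pow_of_resolution {R : Type*} [CommRing R]
    {D M : Matrix n n R} {P : ι → Matrix n n R} {ev : ι → R}
    (hsum : ∑ i, P i = 1) (heig : ∀ i, P i * M = ev i • P i) (m k : ℕ) :
    (D * M ^ m * D * M ^ k).trace
      = ∑ i, ∑ j, ev i ^ m * ev j ^ k * (D * P i * D * P j).trace := by
  simp only [pow_eq_sum_pow_smul_of_resolution hsum heig, Finset.mul_sum, Finset.sum_mul,
    mul_smul_comm, smul_mul_assoc, trace_sum, trace_smul, smul_eq_mul, ← mul_assoc]
  rw [Finset.sum_comm]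
  exact Finset.sum_congr rfl fun i _ => Finset.sum_congr rfl fun j _ => by ring

theorem tendsto_sum_mul_div_pow_of_dominant {ev c : ι → ℝ} {i₀ : ι} (hne : ev i₀ ≠ 0)
    (hdom : ∀ i ≠ i₀, |ev i| < |ev i₀|) :
    Tendsto (fun k : ℕ => ∑ i, c i * (ev i / ev i₀) ^ k) atTop (𝓝 (c i₀)) := by
  classical
  have hterm (i : ι) : Tendsto (fun k : ℕ => c i * (ev i / ev i₀) ^ k) atTop
      (𝓝 (if i = i₀ then c i else 0)) := by
    split_ifs with h
    · simp [h, hne]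
    · simpa using (tendsto_pow_atTop_nhds_zero_of_abs_lt_one (by
        rw [abs_div, div_lt_one (abs_pos.2 hne)]; exact hdom i h)).const_mul (c i)
  simpa using tendsto_finsetSum Finset.univ fun i _ => hterm i

theorem tendsto_trace_correlation_of_resolution {D M : Matrix n n ℝ} {P : ι → Matrix n n ℝ}
    {ev : ι → ℝ} {i₀ : ι} (hsum : ∑ i, P i = 1) (heig : ∀ i, P i * M = ev i • P i)
    (htr : (P i₀).trace = 1) (hne : ev i₀ ≠ 0) (hdom : ∀ i ≠ i₀, |ev i| < |ev i₀|) (m : ℕ) :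
    Tendsto (fun L : ℕ => (D * M ^ m * D * M ^ (L - m - 2)).trace / (M ^ L).trace) atTop
      (𝓝 ((∑ i, ev i ^ m * (D * P i * D * P i₀).trace) / ev i₀ ^ (m + 2))) := by
  have hpow (j : ι) (k : ℕ) : ev j ^ k = ev i₀ ^ k * (ev j / ev i₀) ^ k := by
    rw [div_pow, mul_div_cancel₀ _ (pow_ne_zero k hne)]
  have hnum := tendsto_finsetSum Finset.univ fun i _ =>
    tendsto_sum_mul_div_pow_of_dominant (c := fun j => ev i ^ m * (D * P i * D * P j).trace)
      hne hdom
  have hden := tendsto_sum_mul_div_pow_of_dominant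
    (c := fun j => ev j ^ (m + 2) * (P j).trace) hne hdom
  rw [htr, mul_one] at hden
  rw [← tendsto_add_atTop_iff_nat (m + 2)]
  refine (hnum.div hden (pow_ne_zero _ hne)).congr fun k => ?_
  have hL : k + (m + 2) - m - 2 = k := by omega
  rw [hL, trace_mul_pow_mul_mul_pow_of_resolution hsum heig,
    pow_eq_sum_pow_smul_of_resolution hsum heig]
  simp only [trace_sum, trace_smul, smul_eq_mul, Pi.div_apply]
  rw [← mul_div_mul_left _ _ (pow_ne_zero k hne), Finset.mul_sum, Finset.mul_sum]
  congr 1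
  · refine Finset.sum_congr rfl fun i _ => ?_
    rw [Finset.mul_sum]
    refine Finset.sum_congr rfl fun j _ => ?_
    rw [hpow j k]
    ring
  · refine Finset.sum_congr rfl fun j _ => ?_
    rw [pow_add (ev j) k, hpow j k]
    ring

end TransferMatrix

namespace VBS

noncomputable def lamM (μ : ℝ) : ℝ := (μ ^ 2 + 1) / 2 - lamP μ

theorem sqrt_disc_pos (μ : ℝ) : 0 < Real.sqrt (μ ^ 4 + 14 * μ ^ 2 + 1) :=
  Real.sqrt_pos.2 (by positivity)

theorem lamP_sq (μ : ℝ) : lamP μ ^ 2 = (μ ^ 2 + 1) / 2 * lamP μ + 3 * μ ^ 2 / 4 := by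
  have h := Real.sq_sqrt (show 0 ≤ μ ^ 4 + 14 * μ ^ 2 + 1 by positivity)
  unfold lamP
  linear_combination h / 16

theorem lamM_lt_lamP (μ : ℝ) : lamM μ < lamP μ := by
  have := sqrt_disc_pos μ
  unfold lamM lamP
  linarith

theorem lamP_pos (μ : ℝ) : 0 < lamP μ := by
  have := sqrt_disc_pos μ
  unfold lamP
  positivity

theorem abs_lamM_lt_abs_lamP (μ : ℝ) : |lamM μ| < |lamP μ| := by
  rw [abs_of_pos (lamP_pos μ), abs_lt]
  have := lamM_lt_lamP μ
  constructor <;> unfold lamM at * <;> nlinarith [sq_nonneg μ]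

theorem abs_lam0_lt_abs_lamP (μ : ℝ) : |lam0 μ| < |lamP μ| := by
  have := sqrt_disc_pos μ
  rw [abs_of_pos (lamP_pos μ), abs_lt]
  unfold lam0 lamP
  constructor <;> nlinarith [sq_nonneg (μ - 1), sq_nonneg (μ + 1)]

noncomputable def E00 : Matrix (Fin 2) (Fin 2) ℝ := !![1, 0; 0, 0]
noncomputable def E01 : Matrix (Fin 2) (Fin 2) ℝ := !![0, 1; 0, 0]
noncomputable def E10 : Matrix (Fin 2) (Fin 2) ℝ := !![0, 0; 1, 0]
noncomputable def E11 : Matrix (Fin 2) (Fin 2) ℝ := !![0, 0; 0, 1]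

noncomputable def Q : Matrix (Fin 2 × Fin 2) (Fin 2 × Fin 2) ℝ := E00 ⊗ₖ E11 + E11 ⊗ₖ E00

noncomputable def Dhat (μ : ℝ) : Matrix (Fin 2 × Fin 2) (Fin 2 × Fin 2) ℝ :=
  (1 / 2 : ℝ) • (E00 ⊗ₖ E01 + E01 ⊗ₖ E00) - (1 / 2 : ℝ) • (E00 ⊗ₖ E10 + E10 ⊗ₖ E00)
    - (μ / 2) • (E01 ⊗ₖ E11 + E11 ⊗ₖ E01) + (μ / 2) • (E10 ⊗ₖ E11 + E11 ⊗ₖ E10)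

-- With `B = [[1/2, μ], [μ, μ²/2]]` the block of `T` on `span{e₀₀, e₁₁}`, these are `B - λ₋` and
-- `λ₊ - B` there, i.e. `λ₊ - λ₋` times the projections onto the two eigenlines of `B`.
noncomputable def Rplus (μ : ℝ) : Matrix (Fin 2 × Fin 2) (Fin 2 × Fin 2) ℝ :=
  (1 / 2 - lamM μ) • (E00 ⊗ₖ E00) + μ • (E01 ⊗ₖ E01 + E10 ⊗ₖ E10)
    + (μ ^ 2 / 2 - lamM μ) • (E11 ⊗ₖ E11)

noncomputable def Rminus (μ : ℝ) : Matrix (Fin 2 × Fin 2) (Fin 2 × Fin 2) ℝ :=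
  (lamP μ - 1 / 2) • (E00 ⊗ₖ E00) - μ • (E01 ⊗ₖ E01 + E10 ⊗ₖ E10)
    + (lamP μ - μ ^ 2 / 2) • (E11 ⊗ₖ E11)

theorem T_eq {μ : ℝ} (hμ : 0 ≤ μ) :
    T μ = (1 / 2 : ℝ) • (E00 ⊗ₖ E00) + μ • (E01 ⊗ₖ E01 + E10 ⊗ₖ E10)
      + (μ ^ 2 / 2) • (E11 ⊗ₖ E11) + lam0 μ • Q := by
  have hsqrt : Real.sqrt μ ^ 2 = μ := Real.sq_sqrt hμ
  have hsqrt2 : (Real.sqrt 2)⁻¹ ^ 2 = 2⁻¹ := by rw [inv_pow, Real.sq_sqrt zero_le_two]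
  ext ⟨i, j⟩ ⟨k, l⟩
  fin_cases i <;> fin_cases j <;> fin_cases k <;> fin_cases l <;>
    simp [T, Q, lam0, A1, A0, Am1, E00, E01, E10, E11, kroneckerMap_apply] <;>
    ring_nf <;> simp only [hsqrt, hsqrt2] <;> ring

theorem Dx_eq (μ : ℝ) : Dx μ = Real.sqrt μ • Dhat μ := by
  have hsqrt2 : (Real.sqrt 2)⁻¹ ^ 2 = 2⁻¹ := by rw [inv_pow, Real.sq_sqrt zero_le_two]
  ext ⟨i, j⟩ ⟨k, l⟩
  fin_cases i <;> fin_cases j <;> fin_cases k <;> fin_cases l <;>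
    simp [Dx, Dhat, A1, A0, Am1, E00, E01, E10, E11, kroneckerMap_apply] <;>
    ring_nf <;> simp only [hsqrt2] <;> ring

theorem Rplus_mul_T {μ : ℝ} (hμ : 0 ≤ μ) : Rplus μ * T μ = lamP μ • Rplus μ := by
  rw [T_eq hμ]
  ext ⟨i, j⟩ ⟨k, l⟩
  fin_cases i <;> fin_cases j <;> fin_cases k <;> fin_cases l <;>
    simp [Rplus, Q, lamM, E00, E01, E10, E11, mul_apply, Fintype.sum_prod_type,
      kroneckerMap_apply] <;>
    linarith [lamP_sq μ]

theorem Rminus_mul_T {μ : ℝ} (hμ : 0 ≤ μ) : Rminus μ * T μ = lamM μ • Rminus μ := by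
  rw [T_eq hμ]
  ext ⟨i, j⟩ ⟨k, l⟩
  fin_cases i <;> fin_cases j <;> fin_cases k <;> fin_cases l <;>
    simp [Rminus, Q, lamM, E00, E01, E10, E11, mul_apply, Fintype.sum_prod_type,
      kroneckerMap_apply] <;>
    linarith [lamP_sq μ]

theorem Q_mul_T {μ : ℝ} (hμ : 0 ≤ μ) : Q * T μ = lam0 μ • Q := by
  rw [T_eq hμ]
  ext ⟨i, j⟩ ⟨k, l⟩
  fin_cases i <;> fin_cases j <;> fin_cases k <;> fin_cases l <;>
    simp [Q, E00, E01, E10, E11, mul_apply, Fintype.sum_prod_type, kroneckerMap_apply]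

theorem Rplus_add_Rminus (μ : ℝ) : Rplus μ + Rminus μ = (lamP μ - lamM μ) • (1 - Q) := by
  ext ⟨i, j⟩ ⟨k, l⟩
  fin_cases i <;> fin_cases j <;> fin_cases k <;> fin_cases l <;>
    simp [Rplus, Rminus, Q, lamM, E00, E01, E10, E11, one_apply, kroneckerMap_apply]

theorem trace_Rplus (μ : ℝ) : (Rplus μ).trace = lamP μ - lamM μ := by
  simp [Rplus, lamM, E00, E01, E10, E11, trace, Fintype.sum_prod_type, kroneckerMap_apply]
  ring

theorem trace_Dhat_Rplus_Dhat_Rplus (μ : ℝ) : (Dhat μ * Rplus μ * Dhat μ * Rplus μ).trace = 0 := by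
  simp [Dhat, Rplus, E00, E01, E10, E11, trace, mul_apply, Fintype.sum_prod_type,
    kroneckerMap_apply]

theorem trace_Dhat_Rminus_Dhat_Rplus (μ : ℝ) :
    (Dhat μ * Rminus μ * Dhat μ * Rplus μ).trace = 0 := by
  simp [Dhat, Rplus, Rminus, E00, E01, E10, E11, trace, mul_apply, Fintype.sum_prod_type,
    kroneckerMap_apply]

theorem trace_Dhat_Q_Dhat_Rplus (μ : ℝ) :
    (Dhat μ * Q * Dhat μ * Rplus μ).trace = -((lamP μ + 1 / 2) * (lamP μ + μ ^ 2 / 2)) / 2 := by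
  simp [Dhat, Rplus, Q, lamM, E00, E01, E10, E11, trace, mul_apply, Fintype.sum_prod_type,
    kroneckerMap_apply]
  linarith [lamP_sq μ]

noncomputable def transferEigenvalue (μ : ℝ) : Fin 3 → ℝ := ![lamP μ, lamM μ, lam0 μ]

noncomputable def transferProjection (μ : ℝ) :
    Fin 3 → Matrix (Fin 2 × Fin 2) (Fin 2 × Fin 2) ℝ :=
  ![(lamP μ - lamM μ)⁻¹ • Rplus μ, (lamP μ - lamM μ)⁻¹ • Rminus μ, Q]

theorem sum_transferProjection (μ : ℝ) : ∑ i, transferProjection μ i = 1 := by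
  have hgap : lamP μ - lamM μ ≠ 0 := (sub_pos.2 (lamM_lt_lamP μ)).ne'
  simp only [Fin.sum_univ_three, transferProjection, Matrix.cons_val_zero, Matrix.cons_val_one,
    Matrix.cons_val_two, Matrix.head_cons, Matrix.tail_cons]
  rw [← smul_add, Rplus_add_Rminus, smul_smul, inv_mul_cancel₀ hgap, one_smul, sub_add_cancel]

theorem transferProjection_mul_T {μ : ℝ} (hμ : 0 ≤ μ) (i : Fin 3) :
    transferProjection μ i * T μ = transferEigenvalue μ i • transferProjection μ i := by
  fin_cases i <;>
    simp [transferProjection, transferEigenvalue, Rplus_mul_T hμ,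
      Rminus_mul_T hμ, Q_mul_T hμ, smul_comm (lamP μ - lamM μ)⁻¹]

theorem trace_transferProjection_zero (μ : ℝ) : (transferProjection μ 0).trace = 1 := by
  simp [transferProjection, trace_Rplus, (sub_pos.2 (lamM_lt_lamP μ)).ne']

theorem abs_transferEigenvalue_lt (μ : ℝ) (i : Fin 3) (hi : i ≠ 0) :
    |transferEigenvalue μ i| < |transferEigenvalue μ 0| := by
  fin_cases i
  · exact absurd rfl hi
  · exact abs_lamM_lt_abs_lamP μ
  · exact abs_lam0_lt_abs_lamP μ

theorem correlation_limit_eq {μ : ℝ} (hμ : 0 ≤ μ) (m : ℕ) :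
    (∑ i, transferEigenvalue μ i ^ m *
        (Dx μ * transferProjection μ i * Dx μ * transferProjection μ 0).trace) / lamP μ ^ (m + 2)
      = ((lamP μ + 1 / 2) * (lamP μ + μ ^ 2 / 2) /
          (2 * (lamP μ - (μ ^ 2 + 1) / 4) * lamP μ)) * (lam0 μ / lamP μ) ^ (m + 1) := by
  have hgap_eq : lamP μ - lamM μ = 2 * (lamP μ - (μ ^ 2 + 1) / 4) := by unfold lamM; ring
  have hgap : lamP μ - (μ ^ 2 + 1) / 4 ≠ 0 := by
    have := lamM_lt_lamP μ
    linarith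
  have hP := (lamP_pos μ).ne'
  simp only [Fin.sum_univ_three, transferProjection, transferEigenvalue, Matrix.cons_val_zero,
    Matrix.cons_val_one, Matrix.cons_val_two, Matrix.head_cons, Matrix.tail_cons, Dx_eq,
    smul_mul_assoc, mul_smul_comm, trace_smul, smul_eq_mul, trace_Dhat_Rplus_Dhat_Rplus,
    trace_Dhat_Rminus_Dhat_Rplus, trace_Dhat_Q_Dhat_Rplus, mul_zero, zero_add]
  rw [← mul_assoc (Real.sqrt μ), Real.mul_self_sqrt hμ, hgap_eq, div_pow, pow_succ (lam0 μ),
    pow_add (lamP μ)]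
  generalize lamP μ - (μ ^ 2 + 1) / 4 = g at hgap ⊢
  unfold lam0
  field_simp
  ring

end VBS

/-- The transverse spin-spin correlation function of the infinite-volume S=1
asymmetric VBS state: for every `r ≥ 1`, `⟨Ŝˣ_j Ŝˣ_{j+r}⟩` equals
`[(λ₊+1/2)(λ₊+μ²/2) / (2(λ₊−(μ²+1)/4)λ₊)]·(λ₀/λ₊)^r`. -/
theorem xx_correlation_S1 (μ : ℝ) (hμ : μ ∈ Set.Icc (0 : ℝ) 1) (r : ℕ) (hr : 1 ≤ r) :
    Tendsto (fun L : ℕ =>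
        (Dx μ * T μ ^ (r - 1) * Dx μ * T μ ^ (L - r - 1)).trace / (T μ ^ L).trace)
      atTop (nhds
        (((lamP μ + 1 / 2) * (lamP μ + μ ^ 2 / 2) /
            (2 * (lamP μ - (μ ^ 2 + 1) / 4) * lamP μ)) * (lam0 μ / lamP μ) ^ r)) := by
  obtain ⟨m, rfl⟩ : ∃ m, r = m + 1 := ⟨r - 1, by omega⟩
  have hlim := tendsto_trace_correlation_of_resolution (D := Dx μ)
    (VBS.sum_transferProjection μ) (VBS.transferProjection_mul_T hμ.1)
    (VBS.trace_transferProjection_zero μ) (VBS.lamP_pos μ).ne' (VBS.abs_transferEigenvalue_lt μ) m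
  convert hlim using 2 with L
  · rw [Nat.add_sub_cancel, show L - (m + 1) - 1 = L - m - 2 by omega]
  · exact (VBS.correlation_limit_eq hμ.1 m).symm
end

section
/- For every μ ∈ (0, 1] there exist w₁ > 0 and w₂ > 0 such that, setting W := diag(w₁, w₂) and B⁽ᵐ⁾ := W⁻¹·A⁽ᵐ⁾·W for m ∈ {1, 0, −1}, the normalization condition B⁽¹⁾·(B⁽¹⁾)ᵀ + B⁽⁰⁾·(B⁽⁰⁾)ᵀ + B⁽⁻¹⁾·(B⁽⁻¹⁾)ᵀ = λ₊(μ)·I₂ holds, where I₂ is the 2×2 identity matrix. (This is the injectivity normalization, condition (ii) of the Fannes–Nachtergaele–Werner theory, for the matrix product representation of the S=1 asymmetric VBS state.) -/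
open Matrix

/-!
On diagonal matrices the dual transfer map `D ↦ Σₘ A⁽ᵐ⁾ D (A⁽ᵐ⁾)ᵀ` acts as the symmetric
matrix `[[1/2, μ], [μ, μ²/2]]`, whose largest eigenvalue is `λ₊(μ)`, with the positive
eigenvector `(μ, λ₊ - 1/2)`. Taking `W² = diag(μ, λ₊ - 1/2)` therefore gives
`Σₘ A⁽ᵐ⁾ W² (A⁽ᵐ⁾)ᵀ = λ₊ W²`, and conjugating by `W⁻¹` turns this into the normalization.
-/

section Conjugation

variable {n R : Type*} [Fintype n] [DecidableEq n] [CommRing R]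

theorem conj_mul_conj_transpose {W : Matrix n n R} (hWT : Wᵀ = W) (A : Matrix n n R) :
    (W⁻¹ * A * W) * (W⁻¹ * A * W)ᵀ = W⁻¹ * (A * (W * W) * Aᵀ) * W⁻¹ := by
  simp only [transpose_mul, transpose_nonsing_inv, hWT, Matrix.mul_assoc]

theorem inv_mul_smul_mul_self_mul_inv {W : Matrix n n R} (hW : IsUnit W.det) (c : R) :
    W⁻¹ * (c • (W * W)) * W⁻¹ = c • 1 := by
  rw [Matrix.mul_smul, Matrix.smul_mul, ← Matrix.mul_assoc, nonsing_inv_mul _ hW, Matrix.one_mul,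
    mul_nonsing_inv _ hW]

end Conjugation

theorem lamP_sub_half_mul_lamP_sub (μ : ℝ) :
    (lamP μ - 1 / 2) * (lamP μ - μ ^ 2 / 2) = μ ^ 2 := by
  have hs := Real.sq_sqrt (show 0 ≤ μ ^ 4 + 14 * μ ^ 2 + 1 by positivity)
  unfold lamP
  linear_combination hs / 16

theorem half_lt_lamP {μ : ℝ} (hμ : μ ≠ 0) : 1 / 2 < lamP μ := by
  have hs := Real.sq_sqrt (show 0 ≤ μ ^ 4 + 14 * μ ^ 2 + 1 by positivity)
  have hs0 := Real.sqrt_nonneg (μ ^ 4 + 14 * μ ^ 2 + 1)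
  have hμ2 : 0 < μ ^ 2 := by positivity
  unfold lamP
  nlinarith

theorem vbs_sum_mul_diagonal_mul_transpose {μ : ℝ} (hμ : 0 ≤ μ) (d₁ d₂ : ℝ) :
    A1 μ * diagonal ![d₁, d₂] * (A1 μ)ᵀ + A0 μ * diagonal ![d₁, d₂] * (A0 μ)ᵀ +
        Am1 μ * diagonal ![d₁, d₂] * (Am1 μ)ᵀ =
      diagonal ![d₁ / 2 + μ * d₂, μ * d₁ + μ ^ 2 * d₂ / 2] := by
  ext i j
  fin_cases i <;> fin_cases j <;>
    simp [A1, A0, Am1, vecMul, dotProduct, Fin.sum_univ_two, diagonal_vec2] <;>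
    ring_nf <;>
    simp only [Real.sq_sqrt hμ, inv_pow, Real.sq_sqrt zero_le_two] <;>
    ring

theorem vbs_sum_mul_perronDiagonal_mul_transpose {μ : ℝ} (hμ : 0 ≤ μ) :
    A1 μ * diagonal ![μ, lamP μ - 1 / 2] * (A1 μ)ᵀ +
        A0 μ * diagonal ![μ, lamP μ - 1 / 2] * (A0 μ)ᵀ +
        Am1 μ * diagonal ![μ, lamP μ - 1 / 2] * (Am1 μ)ᵀ =
      lamP μ • diagonal ![μ, lamP μ - 1 / 2] := by
  rw [vbs_sum_mul_diagonal_mul_transpose hμ, ← diagonal_smul, smul_cons, smul_cons, smul_empty,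
    smul_eq_mul, smul_eq_mul]
  congr 3
  · ring
  · linear_combination -lamP_sub_half_mul_lamP_sub μ

theorem fnw_normalization_S1_general (μ : ℝ) (hμ : 0 < μ) :
    ∃ w₁ w₂ : ℝ, 0 < w₁ ∧ 0 < w₂ ∧
      (!![w₁, 0; 0, w₂]⁻¹ * A1 μ * !![w₁, 0; 0, w₂]) *
          (!![w₁, 0; 0, w₂]⁻¹ * A1 μ * !![w₁, 0; 0, w₂])ᵀ +
        (!![w₁, 0; 0, w₂]⁻¹ * A0 μ * !![w₁, 0; 0, w₂]) *
          (!![w₁, 0; 0, w₂]⁻¹ * A0 μ * !![w₁, 0; 0, w₂])ᵀ +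
        (!![w₁, 0; 0, w₂]⁻¹ * Am1 μ * !![w₁, 0; 0, w₂]) *
          (!![w₁, 0; 0, w₂]⁻¹ * Am1 μ * !![w₁, 0; 0, w₂])ᵀ =
      lamP μ • (1 : Matrix (Fin 2) (Fin 2) ℝ) := by
  have hl : 0 < lamP μ - 1 / 2 := sub_pos.2 (half_lt_lamP hμ.ne')
  refine ⟨√μ, √(lamP μ - 1 / 2), Real.sqrt_pos.2 hμ, Real.sqrt_pos.2 hl, ?_⟩
  rw [← diagonal_vec2]
  set W := diagonal ![√μ, √(lamP μ - 1 / 2)]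
  have hWT : Wᵀ = W := diagonal_transpose _
  have hW : IsUnit W.det := by
    simp only [W, det_diagonal, Fin.prod_univ_two]
    exact (mul_pos (Real.sqrt_pos.2 hμ) (Real.sqrt_pos.2 hl)).ne'.isUnit
  have hWW : W * W = diagonal ![μ, lamP μ - 1 / 2] := by
    rw [diagonal_mul_diagonal]
    congr 1
    ext i
    fin_cases i
    · exact Real.mul_self_sqrt hμ.le
    · exact Real.mul_self_sqrt hl.le
  simp only [conj_mul_conj_transpose hWT, ← Matrix.mul_add, ← Matrix.add_mul]
  rw [hWW, vbs_sum_mul_perronDiagonal_mul_transpose hμ.le, ← hWW]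
  exact inv_mul_smul_mul_self_mul_inv hW _

/-- For every `μ ∈ (0,1]` there exist `w₁, w₂ > 0` such that, with `W = diag(w₁, w₂)`
and `B⁽ᵐ⁾ = W⁻¹ A⁽ᵐ⁾ W`, the injectivity normalization
`Σ_m B⁽ᵐ⁾ (B⁽ᵐ⁾)ᵀ = λ₊(μ)·I₂` of the Fannes–Nachtergaele–Werner theory holds. -/
theorem fnw_normalization_S1 (μ : ℝ) (hμ : 0 < μ) (hμ' : μ ≤ 1) :
    ∃ w₁ w₂ : ℝ, 0 < w₁ ∧ 0 < w₂ ∧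
      (!![w₁, 0; 0, w₂]⁻¹ * A1 μ * !![w₁, 0; 0, w₂]) *
          (!![w₁, 0; 0, w₂]⁻¹ * A1 μ * !![w₁, 0; 0, w₂])ᵀ +
        (!![w₁, 0; 0, w₂]⁻¹ * A0 μ * !![w₁, 0; 0, w₂]) *
          (!![w₁, 0; 0, w₂]⁻¹ * A0 μ * !![w₁, 0; 0, w₂])ᵀ +
        (!![w₁, 0; 0, w₂]⁻¹ * Am1 μ * !![w₁, 0; 0, w₂]) *
          (!![w₁, 0; 0, w₂]⁻¹ * Am1 μ * !![w₁, 0; 0, w₂])ᵀ =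
      lamP μ • (1 : Matrix (Fin 2) (Fin 2) ℝ) :=
  fnw_normalization_S1_general μ hμ
end

section
/- Let n and D be positive integers, let A : Fin n → Matrix (Fin D) (Fin D) ℝ be a family of real D×D matrices, let λ ∈ ℝ, and let u : Fin D → ℝ satisfy u(α) > 0 for all α. Assume that for all α, β: Σ_m Σ_{α'} A_m(α,α')·A_m(β,α')·u(α') equals λ·u(α) if α = β and equals 0 otherwise. Define B_m(α,α') := (1/√u(α))·A_m(α,α')·√u(α'). Then Σ_m B_m·(B_m)ᵀ = λ·I_D, where I_D is the D×D identity matrix. -/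
open Matrix

/-- The rescaled matrices `B_m(α,α') = (1/√u(α))·A_m(α,α')·√u(α')` of the general
rescaling lemma (Appendix A). -/
noncomputable def Bmat {n D : ℕ} (A : Fin n → Matrix (Fin D) (Fin D) ℝ)
    (u : Fin D → ℝ) (m : Fin n) : Matrix (Fin D) (Fin D) ℝ :=
  Matrix.of fun α α' => (1 / Real.sqrt (u α)) * A m α α' * Real.sqrt (u α')

/-- The general rescaling lemma of Appendix A: if the diagonal matrix with positive
entries `u` is an eigenvector with eigenvalue `λ` of the transfer matrix built from
the matrices `A_m`, then the rescaled matrices `B_m` satisfy the injectivity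
normalization `Σ_m B_m (B_m)ᵀ = λ·I_D`. -/
theorem rescaling_lemma (n D : ℕ) (hn : 0 < n) (hD : 0 < D)
    (A : Fin n → Matrix (Fin D) (Fin D) ℝ) (lam : ℝ) (u : Fin D → ℝ)
    (hu : ∀ α, 0 < u α)
    (h : ∀ α β : Fin D,
      (∑ m : Fin n, ∑ α' : Fin D, A m α α' * A m β α' * u α') =
        if α = β then lam * u α else 0) :
    ∑ m : Fin n, Bmat A u m * (Bmat A u m)ᵀ = lam • (1 : Matrix (Fin D) (Fin D) ℝ) := by
  ext α β
  have hs : ∀ α : Fin D, Real.sqrt (u α) ≠ 0 := fun α =>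
    ne_of_gt (Real.sqrt_pos.mpr (hu α))
  have key : (∑ m : Fin n, ∑ α' : Fin D,
      (1 / Real.sqrt (u α)) * A m α α' * Real.sqrt (u α') *
        ((1 / Real.sqrt (u β)) * A m β α' * Real.sqrt (u α'))) =
      (1 / Real.sqrt (u α)) * (1 / Real.sqrt (u β)) *
        (∑ m : Fin n, ∑ α' : Fin D, A m α α' * A m β α' * u α') := by
    rw [Finset.mul_sum]
    refine Finset.sum_congr rfl fun m _ => ?_
    rw [Finset.mul_sum]
    refine Finset.sum_congr rfl fun α' _ => ?_
    have : Real.sqrt (u α') * Real.sqrt (u α') = u α' :=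
      Real.mul_self_sqrt (hu α').le
    linear_combination (1 / Real.sqrt (u α) * A m α α' * (1 / Real.sqrt (u β)) * A m β α') * this
  simp only [Matrix.sum_apply, Matrix.mul_apply, Matrix.transpose_apply, Bmat,
    Matrix.of_apply, Matrix.smul_apply, Matrix.one_apply, smul_eq_mul]
  rw [key, h α β]
  by_cases hab : α = β
  · subst hab
    simp only [if_pos rfl]
    rw [div_mul_div_comm, one_mul, Real.mul_self_sqrt (hu α).le]
    simp only [if_true, mul_one]
    rw [one_div, inv_mul_eq_div, mul_comm]
    exact mul_div_cancel_left₀ lam (hu α).ne'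
  · simp [hab]
end
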